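/- Let μ be a locally bounded p-periodic signed Borel measure on ℝ, E ∈ ℝ, and let (u,v) be a solution of −u'' + uμ = Eu with |u(0)|² + |v(0)|² = 1. Then max{ ‖(u(−p), v(−p))‖, ‖(u(p), v(p))‖, ‖(u(2p), v(2p))‖ } ≥ 1/2, where ‖·‖ is the Euclidean norm on ℝ². -/

import Mathlib

/-! The Wronskian of two solutions of `-u'' + u (μ - E) = 0` is constant (integration by parts
against the measure), and a solution is determined by its data `(u, v)` at one point (on a short
interval `|μ|` has small mass, which makes the equation a contraction). Applied to the translates
`w(· - p)`, `w`, `w(· + p)` of `w = (u, v)`, this yields the Cayley–Hamilton relations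
`w(2p) = β w(p) - w(0)` and `w(-p) = β w(0) - w(p)` for the trace `β` of the monodromy. If
`w(-p)`, `w(p)` and `w(2p)` all had norm `< 1/2`, the second relation would give `|β| < 1` and
the first `1 = ‖w(0)‖ < 1/2 + 1/2`. -/

open MeasureTheory Filter Set Real
open scoped ENNReal

/-- A locally finite signed Borel measure on `ℝ`, represented as a formal
difference `pos - neg` of two nonnegative Borel measures. -/
structure SM where
  pos : Measure ℝ
  neg : Measure ℝ

/-- Local finiteness of both parts (i.e. the signed measure has locally finite
total variation). -/
def SM.LocFin (μ : SM) : Prop :=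
  IsLocallyFiniteMeasure μ.pos ∧ IsLocallyFiniteMeasure μ.neg

/-- The total variation `|a - b|` of the formal difference of two measures,
using the lattice-theoretic subtraction of measures (Jordan decomposition). -/
noncomputable def tvSub (a b : Measure ℝ) : Measure ℝ := (a - b) + (b - a)

/-- The total variation measure `|μ|` of a signed measure. -/
noncomputable def SM.tv (μ : SM) : Measure ℝ := tvSub μ.pos μ.neg

/-- The total variation `|μ₁ - μ₂|` of the difference of two signed measures. -/
noncomputable def tvDiff (μ₁ μ₂ : SM) : Measure ℝ :=
  tvSub (μ₁.pos + μ₂.neg) (μ₂.pos + μ₁.neg)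

/-- `‖ν‖_loc = sup_x ν([x, x+1])`. -/
noncomputable def normLoc (ν : Measure ℝ) : ℝ≥0∞ := ⨆ x : ℝ, ν (Set.Icc x (x + 1))

/-- A measure is uniformly locally bounded if `sup_x ν([x,x+1]) < ∞`. -/
def UnifLocBounded (ν : Measure ℝ) : Prop := normLoc ν < ⊤

/-- `μ` is `p`-periodic: `μ(· + p) = μ`. -/
def SM.IsPeriodic (μ : SM) (p : ℝ) : Prop :=
  Measure.map (fun x => x + p) μ.pos = μ.pos ∧ Measure.map (fun x => x + p) μ.neg = μ.neg

/-- `I_x = [min(x,0), max(x,0)]`. -/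
def Ix (x : ℝ) : Set ℝ := Set.Icc (min x 0) (max x 0)

/-- The integral `∫_A f dμ` of `f` over `A` against the signed measure `μ`. -/
noncomputable def SM.integOn (μ : SM) (f : ℝ → ℝ) (A : Set ℝ) : ℝ :=
  (∫ t in A, f t ∂μ.pos) - (∫ t in A, f t ∂μ.neg)

/-- `∫_0^x f dμ := ∫_{[0,x]} f dμ` for `x ≥ 0` and `:= -∫_{(x,0)} f dμ` for `x < 0`. -/
noncomputable def intRight (μ : SM) (f : ℝ → ℝ) (x : ℝ) : ℝ :=
  if 0 ≤ x then μ.integOn f (Set.Icc 0 x) else - μ.integOn f (Set.Ioo x 0)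

/-- `(u, v)` is a solution of `-u'' + u μ = E u`: `u` is locally absolutely
continuous with `u(x) = u(0) + ∫_0^x v`, and
`v(x) = v(0) + ∫_0^x u dμ - E ∫_0^x u` (`v` is the right limit `u'(·+)`). -/
structure IsSolution (μ : SM) (E : ℝ) (u v : ℝ → ℝ) : Prop where
  locInt : LocallyIntegrable v volume
  u_eq : ∀ x : ℝ, u x = u 0 + ∫ t in (0:ℝ)..x, v t
  v_eq : ∀ x : ℝ, v x = v 0 + intRight μ u x - E * ∫ t in (0:ℝ)..x, u t

/-- The total variation measure `|μ - E λ|`, `λ` Lebesgue measure. -/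
noncomputable def tvWithE (μ : SM) (E : ℝ) : Measure ℝ :=
  tvSub (μ.pos + ENNReal.ofReal (-E) • volume) (μ.neg + ENNReal.ofReal E • volume)

/-- Membership in the Sobolev space `W¹₂(ℝ)` (continuous representative `u`
with derivative `d`): `u, d ∈ L²` and `u(x) = u(0) + ∫_0^x d`. -/
def IsW12 (u d : ℝ → ℝ) : Prop :=
  MemLp u 2 volume ∧ MemLp d 2 volume ∧ ∀ x : ℝ, u x = u 0 + ∫ t in (0:ℝ)..x, d t

/-- Addition of signed measures. -/
noncomputable def SM.add (a b : SM) : SM := ⟨a.pos + b.pos, a.neg + b.neg⟩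

/-- The translate `T_x μ = μ(· - x)`. -/
noncomputable def SM.translate (μ : SM) (x : ℝ) : SM :=
  ⟨Measure.map (fun y => y + x) μ.pos, Measure.map (fun y => y + x) μ.neg⟩

/-- The scaled measure `μ ∘ β`, `(μ ∘ β)(A) = μ(β A)`. -/
noncomputable def SM.scale (μ : SM) (β : ℝ) : SM :=
  ⟨Measure.map (fun y => y / β) μ.pos, Measure.map (fun y => y / β) μ.neg⟩

/-- `μ` is a Gordon measure. -/
def IsGordon (μ : SM) : Prop :=
  μ.LocFin ∧ UnifLocBounded μ.tv ∧
  ∃ (μs : ℕ → SM) (p : ℕ → ℝ),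
    (∀ m, 0 < p m) ∧ (∀ m, (μs m).LocFin) ∧ (∀ m, (μs m).IsPeriodic (p m)) ∧
    (∀ m, UnifLocBounded (μs m).tv) ∧
    (∃ M : ℝ≥0∞, M < ⊤ ∧ ∀ m, normLoc (μs m).tv ≤ M) ∧
    Filter.Tendsto p Filter.atTop Filter.atTop ∧
    ∀ C : ℝ, Filter.Tendsto
      (fun m => Real.exp (C * p m) * ((tvDiff μ (μs m)) (Set.Icc (-(p m)) (2 * p m))).toReal)
      Filter.atTop (nhds 0)

open scoped NNReal Topology

instance Measure.isLocallyFiniteMeasure_add {α : Type*} [TopologicalSpace α]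
    [MeasurableSpace α] (μ ν : Measure α) [IsLocallyFiniteMeasure μ]
    [IsLocallyFiniteMeasure ν] : IsLocallyFiniteMeasure (μ + ν) := by
  refine ⟨fun x => ?_⟩
  obtain ⟨s, hs, hμs⟩ := μ.finiteAt_nhds x
  obtain ⟨t, ht, hνt⟩ := ν.finiteAt_nhds x
  refine ⟨s ∩ t, inter_mem hs ht, ?_⟩
  rw [Measure.add_apply]
  exact ENNReal.add_lt_top.2 ⟨(measure_mono inter_subset_left).trans_lt hμs,
    (measure_mono inter_subset_right).trans_lt hνt⟩

lemma map_add_neg_eq_self {G : Type*} [MeasurableSpace G] [AddGroup G] [MeasurableAdd G]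
    {ρ : Measure G} {p : G} (h : Measure.map (· + p) ρ = ρ) :
    Measure.map (· + -p) ρ = ρ := by
  conv_lhs => rw [← h]
  rw [Measure.map_map (measurable_add_const _) (measurable_add_const _)]
  simp

namespace SM

variable {μ : SM}

lemma integOn_const_mul (c : ℝ) (f : ℝ → ℝ) (A : Set ℝ) :
    μ.integOn (fun t => c * f t) A = c * μ.integOn f A := by
  simp only [integOn, integral_const_mul, mul_sub]

lemma integOn_sub (hμ : μ.LocFin) {f g : ℝ → ℝ} (hf : Continuous f) (hg : Continuous g)
    (a b : ℝ) :
    μ.integOn (f - g) (Ioc a b) = μ.integOn f (Ioc a b) - μ.integOn g (Ioc a b) := by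
  have := hμ.1; have := hμ.2
  simp only [integOn, Pi.sub_apply, integral_sub (hf.integrableOn_Ioc (μ := μ.pos))
    (hg.integrableOn_Ioc (μ := μ.pos)), integral_sub (hf.integrableOn_Ioc (μ := μ.neg))
    (hg.integrableOn_Ioc (μ := μ.neg))]
  ring

lemma abs_integOn_le (hμ : μ.LocFin) {f : ℝ → ℝ} {a b M : ℝ} (hM : ∀ t ∈ Ioc a b, |f t| ≤ M) :
    |μ.integOn f (Ioc a b)| ≤ M * (μ.pos.real (Ioc a b) + μ.neg.real (Ioc a b)) := by
  have key : ∀ ρ : Measure ℝ, IsLocallyFiniteMeasure ρ →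
      |∫ t in Ioc a b, f t ∂ρ| ≤ M * ρ.real (Ioc a b) := fun ρ _ => by
    simpa only [Real.norm_eq_abs] using norm_setIntegral_le_of_norm_le_const (f := f)
      measure_Ioc_lt_top (by simpa only [Real.norm_eq_abs] using hM)
  calc |μ.integOn f (Ioc a b)| ≤ |∫ t in Ioc a b, f t ∂μ.pos| + |∫ t in Ioc a b, f t ∂μ.neg| :=
        abs_sub _ _
    _ ≤ _ := by rw [mul_add]; exact add_le_add (key _ hμ.1) (key _ hμ.2)

/-- `μ - E λ`, with `λ` the Lebesgue measure. -/
noncomputable def subSmulVolume (μ : SM) (E : ℝ) : SM :=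
  ⟨μ.pos + (-E).toNNReal • volume, μ.neg + E.toNNReal • volume⟩

lemma LocFin.subSmulVolume (hμ : μ.LocFin) (E : ℝ) : (μ.subSmulVolume E).LocFin := by
  have := hμ.1; have := hμ.2
  exact ⟨Measure.isLocallyFiniteMeasure_add _ _, Measure.isLocallyFiniteMeasure_add _ _⟩

lemma IsPeriodic.neg {p : ℝ} (h : μ.IsPeriodic p) : μ.IsPeriodic (-p) :=
  ⟨map_add_neg_eq_self h.1, map_add_neg_eq_self h.2⟩

lemma IsPeriodic.subSmulVolume {p : ℝ} (h : μ.IsPeriodic p) (E : ℝ) :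
    (μ.subSmulVolume E).IsPeriodic p := by
  simp only [IsPeriodic, SM.subSmulVolume, Measure.map_add _ _ (measurable_add_const p),
    Measure.map_smul, map_add_right_eq_self volume p, h.1, h.2, and_self]

lemma integOn_subSmulVolume (hμ : μ.LocFin) {u : ℝ → ℝ} (hu : Continuous u) (E a b : ℝ) :
    (μ.subSmulVolume E).integOn u (Ioc a b) = μ.integOn u (Ioc a b) - E * ∫ t in Ioc a b, u t := by
  have key : ∀ (ρ : Measure ℝ) (c : ℝ≥0), IsLocallyFiniteMeasure ρ →
      ∫ t in Ioc a b, u t ∂(ρ + c • volume) = (∫ t in Ioc a b, u t ∂ρ) + c * ∫ t in Ioc a b, u t :=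
    fun ρ c _ => by
      rw [Measure.restrict_add, integral_add_measure hu.integrableOn_Ioc
        (hu.integrableOn_Ioc (μ := c • volume)), Measure.restrict_smul,
        integral_smul_nnreal_measure, NNReal.smul_def, smul_eq_mul]
  have hE : ((-E).toNNReal : ℝ) - E.toNNReal = -E := by
    simp only [Real.coe_toNNReal']
    rcases le_total 0 E with hE | hE <;> simp [hE]
  simp only [integOn, SM.subSmulVolume, key _ _ hμ.1, key _ _ hμ.2]
  linear_combination (∫ t in Ioc a b, u t) * hE

lemma IsPeriodic.integOn_comp_add_const {c : ℝ} (h : μ.IsPeriodic c) (f : ℝ → ℝ)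
    (a b : ℝ) : μ.integOn (fun t => f (t + c)) (Ioc a b) = μ.integOn f (Ioc (a + c) (b + c)) := by
  have key : ∀ ρ : Measure ℝ, Measure.map (· + c) ρ = ρ →
      ∫ t in Ioc a b, f (t + c) ∂ρ = ∫ t in Ioc (a + c) (b + c), f t ∂ρ := fun ρ hρ => by
    conv_rhs => rw [← hρ]
    rw [(measurableEmbedding_addRight c).setIntegral_map, preimage_add_const_Ioc,
      add_sub_cancel_right, add_sub_cancel_right]
  simp only [integOn, key _ h.1, key _ h.2]

end SM

lemma intRight_eq {μ : SM} (hμ : μ.LocFin) {u : ℝ → ℝ} (hu : Continuous u) (x : ℝ) :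
    intRight μ u x = μ.integOn u {0} + ((∫ t in 0..x, u t ∂μ.pos) - ∫ t in 0..x, u t ∂μ.neg) := by
  have key : ∀ ρ : Measure ℝ, IsLocallyFiniteMeasure ρ →
      (∫ t in ({0} : Set ℝ), u t ∂ρ) + ∫ t in 0..x, u t ∂ρ =
        if 0 ≤ x then ∫ t in Icc 0 x, u t ∂ρ else -∫ t in Ioo x 0, u t ∂ρ := fun ρ _ => by
    have h0 : IntegrableOn u {0} ρ := by simpa using hu.integrableOn_Icc (μ := ρ) (a := 0) (b := 0)
    split_ifs with hx
    · rw [intervalIntegral.integral_of_le hx, ← Ioc_insert_left hx, insert_eq,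
        setIntegral_union (by simp) measurableSet_Ioc h0 hu.integrableOn_Ioc]
    · rw [intervalIntegral.integral_of_ge (not_le.mp hx).le, ← Ioo_insert_right (not_le.mp hx),
        insert_eq, union_comm, setIntegral_union (by simp) (measurableSet_singleton 0)
          (hu.integrableOn_Icc.mono_set Ioo_subset_Icc_self) h0]
      ring
  have h1 := key _ hμ.1
  have h2 := key _ hμ.2
  simp only [intRight, SM.integOn]
  split_ifs at h1 h2 ⊢ <;> linarith

lemma intRight_sub_intRight {μ : SM} (hμ : μ.LocFin) {u : ℝ → ℝ} (hu : Continuous u) {x y : ℝ}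
    (hyx : y ≤ x) : intRight μ u x - intRight μ u y = μ.integOn u (Ioc y x) := by
  have key : ∀ ρ : Measure ℝ, IsLocallyFiniteMeasure ρ →
      (∫ t in 0..x, u t ∂ρ) - ∫ t in 0..y, u t ∂ρ = ∫ t in Ioc y x, u t ∂ρ := fun ρ _ => by
    rw [intervalIntegral.integral_interval_sub_left (hu.intervalIntegrable _ _)
      (hu.intervalIntegrable _ _), intervalIntegral.integral_of_le hyx]
  simp only [intRight_eq hμ hu, SM.integOn]
  linarith [key _ hμ.1, key _ hμ.2]

section IntegrationByParts

variable {σ ρ : Measure ℝ} {f g : ℝ → ℝ}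

lemma integral_indicator_le_eq_mul (s : ℝ) :
    ∫ t, {z : ℝ × ℝ | z.2 ≤ z.1}.indicator (fun z => f z.1 * g z.2) (s, t) ∂ρ =
      f s * ∫ t in Iic s, g t ∂ρ := by
  rw [← integral_const_mul, ← integral_indicator measurableSet_Iic]
  rfl

lemma integral_indicator_lt_eq_mul (t : ℝ) :
    ∫ s, {z : ℝ × ℝ | z.1 < z.2}.indicator (fun z => f z.1 * g z.2) (s, t) ∂σ =
      g t * ∫ s in Iio t, f s ∂σ := by
  rw [← integral_const_mul, ← integral_indicator measurableSet_Iio]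
  congr 1; ext s
  simp only [indicator, mem_ofPred_eq, mem_Iio, mul_comm]

lemma integrable_mul_integral_Iic [SFinite ρ] (hf : Integrable f σ) (hg : Integrable g ρ) :
    Integrable (fun s => f s * ∫ t in Iic s, g t ∂ρ) σ :=
  (((hf.mul_prod hg).indicator (measurableSet_le measurable_snd measurable_fst)).integral_prod_left
    ).congr (Eventually.of_forall integral_indicator_le_eq_mul)

/-- Integration by parts for the distribution functions of `f σ` and `g ρ`: Fubini on `σ × ρ`,
split along the diagonal. -/
lemma integral_mul_integral_eq_add [SFinite σ] [SFinite ρ] (hf : Integrable f σ)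
    (hg : Integrable g ρ) :
    (∫ s, f s ∂σ) * (∫ t, g t ∂ρ) =
      ∫ t, g t * (∫ s in Iio t, f s ∂σ) ∂ρ + ∫ s, f s * (∫ t in Iic s, g t ∂ρ) ∂σ := by
  have hF := hf.mul_prod hg
  have hlt : MeasurableSet {z : ℝ × ℝ | z.1 < z.2} := measurableSet_lt measurable_fst measurable_snd
  have hcompl : {z : ℝ × ℝ | z.1 < z.2}ᶜ = {z | z.2 ≤ z.1} := by ext; simp
  rw [← integral_prod_mul, ← integral_add_compl hlt hF, hcompl, ← integral_indicator hlt,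
    ← integral_indicator (hcompl ▸ hlt.compl), integral_prod_symm _ (hF.indicator hlt),
    integral_prod _ (hF.indicator (hcompl ▸ hlt.compl))]
  simp only [integral_indicator_lt_eq_mul, integral_indicator_le_eq_mul]

variable {a b : ℝ}

lemma setIntegral_Iio_restrict_Ioc {t : ℝ} (ht : t ∈ Ioc a b) :
    ∫ s in Iio t, f s ∂(σ.restrict (Ioc a b)) = ∫ s in Ioo a t, f s ∂σ := by
  rw [Measure.restrict_restrict measurableSet_Iio]
  congr 2
  ext s
  simp only [mem_inter_iff, mem_Iio, mem_Ioc, mem_Ioo]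
  constructor
  · rintro ⟨hst, has, -⟩; exact ⟨has, hst⟩
  · rintro ⟨has, hst⟩; exact ⟨hst, has, hst.le.trans ht.2⟩

lemma setIntegral_Iic_restrict_Ioc {s : ℝ} (hs : s ∈ Ioc a b) :
    ∫ t in Iic s, g t ∂(ρ.restrict (Ioc a b)) = ∫ t in Ioc a s, g t ∂ρ := by
  rw [Measure.restrict_restrict measurableSet_Iic]
  congr 2
  ext t
  simp only [mem_inter_iff, mem_Iic, mem_Ioc]
  constructor
  · rintro ⟨hts, hat, -⟩; exact ⟨hat, hts⟩
  · rintro ⟨hat, hts⟩; exact ⟨hts, hat, hts.trans hs.2⟩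

lemma integrableOn_mul_setIntegral_Ioc [SFinite ρ] (hf : IntegrableOn f (Ioc a b) σ)
    (hg : IntegrableOn g (Ioc a b) ρ) :
    IntegrableOn (fun s => f s * ∫ t in Ioc a s, g t ∂ρ) (Ioc a b) σ :=
  (show IntegrableOn _ (Ioc a b) σ from integrable_mul_integral_Iic hf hg).congr_fun
    (fun _ hs => by simp only [setIntegral_Iic_restrict_Ioc hs]) measurableSet_Ioc

lemma setIntegral_mul_setIntegral_Ioc [SFinite σ] [SFinite ρ] (hf : IntegrableOn f (Ioc a b) σ)
    (hg : IntegrableOn g (Ioc a b) ρ) :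
    (∫ s in Ioc a b, f s ∂σ) * (∫ t in Ioc a b, g t ∂ρ) =
      (∫ t in Ioc a b, g t * (∫ s in Ioo a t, f s ∂σ) ∂ρ) +
        ∫ s in Ioc a b, f s * (∫ t in Ioc a s, g t ∂ρ) ∂σ := by
  rw [integral_mul_integral_eq_add hf hg]
  congr 1 <;> refine setIntegral_congr_fun measurableSet_Ioc fun x hx => ?_
  · rw [setIntegral_Iio_restrict_Ioc hx]
  · rw [setIntegral_Iic_restrict_Ioc hx]

end IntegrationByParts

lemma tendsto_measureReal_Ioc_add (ρ : Measure ℝ) [IsLocallyFiniteMeasure ρ] (c : ℝ) :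
    Tendsto (fun δ => ρ.real (Ioc c (c + δ))) (𝓝[>] 0) (𝓝 0) := by
  have hempty : ⋂ δ > (0 : ℝ), Ioc c (c + δ) = ∅ := by
    refine eq_empty_of_forall_notMem fun t ht => ?_
    simp only [mem_iInter, mem_Ioc] at ht
    have := (ht (t - c) (sub_pos.2 (ht 1 one_pos).1)).1
    linarith [(ht ((t - c) / 2) (by linarith)).2]
  have := tendsto_measure_biInter_gt (μ := ρ) (a := (0 : ℝ)) (s := fun δ => Ioc c (c + δ))
    (fun _ _ => nullMeasurableSet_Ioc)
    (fun _ _ _ hij => Ioc_subset_Ioc_right (by linarith)) ⟨1, one_pos, measure_Ioc_lt_top.ne⟩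
  rw [hempty, measure_empty] at this
  exact (ENNReal.tendsto_toReal ENNReal.zero_ne_top).comp this

lemma exists_eq_mul_of_mul_sub_mul_eq_zero {b₁ b₂ c₁ c₂ : ℝ} (hb : (b₁, b₂) ≠ 0)
    (h : b₁ * c₂ - c₁ * b₂ = 0) : ∃ l, c₁ = l * b₁ ∧ c₂ = l * b₂ := by
  by_cases hb₁ : b₁ = 0
  · have hb₂ : b₂ ≠ 0 := fun hb₂ => hb (by simp [hb₁, hb₂])
    refine ⟨c₂ / b₂, ?_, by field_simp⟩
    have : c₁ * b₂ = 0 := by simpa [hb₁] using h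
    simp [hb₁, (mul_eq_zero.1 this).resolve_right hb₂]
  · exact ⟨c₁ / b₁, by field_simp, by field_simp; linear_combination h⟩

/-- `(u, v)` solves `-u'' + u ν = 0`. The equation for `v` is written on half-open intervals
`(y, x]`, so that `v = u'(· +)` is right-continuous and jumps by `u(x) ν{x}` at an atom `x`. -/
structure IsSolution₀ (ν : SM) (u v : ℝ → ℝ) : Prop where
  intervalIntegrable : ∀ a b, IntervalIntegrable v volume a b
  u_eq : ∀ y x, u x = u y + ∫ t in y..x, v t
  v_eq : ∀ ⦃y x⦄, y ≤ x → v x = v y + ν.integOn u (Ioc y x)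

namespace IsSolution₀

variable {ν : SM} {u v u₁ v₁ u₂ v₂ : ℝ → ℝ} {a b c p x : ℝ}

lemma continuous (h : IsSolution₀ ν u v) : Continuous u := by
  rw [funext (h.u_eq 0)]
  exact continuous_const.add (intervalIntegral.continuous_primitive h.intervalIntegrable 0)

lemma comp_add_const (h : IsSolution₀ ν u v) {c : ℝ} (hc : ν.IsPeriodic c) :
    IsSolution₀ ν (fun x => u (x + c)) (fun x => v (x + c)) where
  intervalIntegrable a b := by
    simpa using (h.intervalIntegrable (a + c) (b + c)).comp_add_right c
  u_eq y x := by
    rw [intervalIntegral.integral_comp_add_right]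
    exact h.u_eq _ _
  v_eq y x hyx := by
    rw [hc.integOn_comp_add_const]
    exact h.v_eq (by linarith)

lemma const_mul (h : IsSolution₀ ν u v) (l : ℝ) :
    IsSolution₀ ν (fun x => l * u x) (fun x => l * v x) where
  intervalIntegrable a b := (h.intervalIntegrable a b).const_mul l
  u_eq y x := by rw [intervalIntegral.integral_const_mul, h.u_eq y x]; ring
  v_eq y x hyx := by rw [SM.integOn_const_mul, h.v_eq hyx]; ring

lemma sub (hν : ν.LocFin) (h₁ : IsSolution₀ ν u₁ v₁) (h₂ : IsSolution₀ ν u₂ v₂) :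
    IsSolution₀ ν (u₁ - u₂) (v₁ - v₂) where
  intervalIntegrable a b := (h₁.intervalIntegrable a b).sub (h₂.intervalIntegrable a b)
  u_eq y x := by
    simp only [Pi.sub_apply]
    rw [intervalIntegral.integral_sub (h₁.intervalIntegrable y x) (h₂.intervalIntegrable y x),
      h₁.u_eq y x, h₂.u_eq y x]
    ring
  v_eq y x hyx := by
    simp only [Pi.sub_apply]
    rw [SM.integOn_sub hν h₁.continuous h₂.continuous, h₁.v_eq hyx, h₂.v_eq hyx]
    ring

/-- Integration by parts for `u₁ v₂`, where `u₁' = v₁` and `dv₂ = u₂ dν`. -/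
lemma mul_sub_mul_eq (hν : ν.LocFin) (h₁ : IsSolution₀ ν u₁ v₁) (h₂ : IsSolution₀ ν u₂ v₂)
    (hab : a ≤ b) :
    u₁ b * v₂ b - u₁ a * v₂ a =
      ν.integOn (fun t => u₁ t * u₂ t) (Ioc a b) + ∫ t in a..b, v₁ t * v₂ t := by
  have := hν.1; have := hν.2
  have hu₁ := h₁.continuous
  have hu₂ := h₂.continuous
  have hv₁ : IntegrableOn v₁ (Ioc a b) := (h₁.intervalIntegrable a b).1
  have hu₁_eq : u₁ b - u₁ a = ∫ s in Ioc a b, v₁ s := by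
    rw [← intervalIntegral.integral_of_le hab, h₁.u_eq a b]; ring
  have key : ∀ ρ : Measure ℝ, IsLocallyFiniteMeasure ρ →
      (u₁ b - u₁ a) * ∫ t in Ioc a b, u₂ t ∂ρ =
        (∫ t in Ioc a b, u₁ t * u₂ t ∂ρ) - u₁ a * (∫ t in Ioc a b, u₂ t ∂ρ) +
          ∫ s in Ioc a b, v₁ s * ∫ t in Ioc a s, u₂ t ∂ρ := fun ρ _ => by
    rw [hu₁_eq, setIntegral_mul_setIntegral_Ioc hv₁ hu₂.integrableOn_Ioc, ← integral_const_mul,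
      ← integral_sub (f := fun t => u₁ t * u₂ t) (hu₁.mul hu₂).integrableOn_Ioc
        (hu₂.integrableOn_Ioc.const_mul _)]
    congr 1
    refine setIntegral_congr_fun measurableSet_Ioc fun t ht => ?_
    rw [← integral_Ioc_eq_integral_Ioo, ← intervalIntegral.integral_of_le ht.1.le,
      h₁.u_eq a t]
    ring
  have hv₂_eq : ∀ s ∈ Ioc a b, v₁ s * (v₂ s - v₂ a) =
      v₁ s * (∫ t in Ioc a s, u₂ t ∂ν.pos) - v₁ s * ∫ t in Ioc a s, u₂ t ∂ν.neg := fun s hs => by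
    rw [h₂.v_eq hs.1.le, SM.integOn]; ring
  have hint_pos := integrableOn_mul_setIntegral_Ioc hv₁ (hu₂.integrableOn_Ioc (μ := ν.pos))
  have hint_neg := integrableOn_mul_setIntegral_Ioc hv₁ (hu₂.integrableOn_Ioc (μ := ν.neg))
  have hint : IntegrableOn (fun s => v₁ s * (v₂ s - v₂ a)) (Ioc a b) :=
    (hint_pos.sub hint_neg).congr_fun (fun s hs => (hv₂_eq s hs).symm) measurableSet_Ioc
  have hvv : ∫ s in Ioc a b, v₁ s * v₂ s =
      (∫ s in Ioc a b, v₁ s * ∫ t in Ioc a s, u₂ t ∂ν.pos) -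
        (∫ s in Ioc a b, v₁ s * ∫ t in Ioc a s, u₂ t ∂ν.neg) + v₂ a * (u₁ b - u₁ a) := by
    rw [← integral_sub hint_pos hint_neg, ← setIntegral_congr_fun measurableSet_Ioc hv₂_eq,
      hu₁_eq, ← integral_const_mul, ← integral_add hint (hv₁.const_mul _)]
    exact setIntegral_congr_fun measurableSet_Ioc fun s _ => by ring
  rw [intervalIntegral.integral_of_le hab, hvv, h₂.v_eq hab]
  simp only [SM.integOn]
  linear_combination key _ hν.1 - key _ hν.2

lemma wronskian_eq (hν : ν.LocFin) (h₁ : IsSolution₀ ν u₁ v₁) (h₂ : IsSolution₀ ν u₂ v₂)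
    (hab : a ≤ b) : u₁ b * v₂ b - u₂ b * v₁ b = u₁ a * v₂ a - u₂ a * v₁ a := by
  have h₁₂ := mul_sub_mul_eq hν h₁ h₂ hab
  have h₂₁ := mul_sub_mul_eq hν h₂ h₁ hab
  simp only [mul_comm (u₂ _) (u₁ _), mul_comm (v₂ _) (v₁ _)] at h₂₁
  linarith

lemma v_eq_of_forall_eq_zero (h : IsSolution₀ ν u v) (hax : a ≤ x)
    (hu : ∀ t ∈ Ioc a x, u t = 0) : v x = v a := by
  rw [h.v_eq hax, SM.integOn, setIntegral_eq_zero_of_forall_eq_zero hu,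
    setIntegral_eq_zero_of_forall_eq_zero hu]
  ring

/-- For small `δ`, both `δ` and the mass `m` of `|ν|` on `(c, c + δ]` are `< 1`, and the equation
gives `sup |u| ≤ m δ sup |u|` on `[c, c + δ]`. -/
lemma eventually_eq_zero (hν : ν.LocFin) (h : IsSolution₀ ν u v) (hu : u c = 0)
    (hv : v c = 0) : ∀ᶠ y in 𝓝[>] c, u y = 0 := by
  have := hν.1; have := hν.2
  set m : ℝ → ℝ := fun δ => ν.pos.real (Ioc c (c + δ)) + ν.neg.real (Ioc c (c + δ))
  have hm : Tendsto m (𝓝[>] 0) (𝓝 0) := by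
    simpa [m] using (tendsto_measureReal_Ioc_add ν.pos c).add (tendsto_measureReal_Ioc_add ν.neg c)
  obtain ⟨δ, hδm, hδ1, hδ0 : 0 < δ⟩ := ((hm.eventually (gt_mem_nhds one_pos)).and
    (((gt_mem_nhds one_pos).filter_mono nhdsWithin_le_nhds).and self_mem_nhdsWithin)).exists
  obtain ⟨y₀, hy₀K, hy₀⟩ := isCompact_Icc.exists_isMaxOn (nonempty_Icc.2 (by linarith : c ≤ c + δ))
    (continuous_abs.comp h.continuous).continuousOn
  set M := |u y₀|
  have hm0 : 0 ≤ m δ := by positivity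
  have hv_le : ∀ t ∈ Ioc c (c + δ), |v t| ≤ M * m δ := fun t ht => by
    have hmono : ν.pos.real (Ioc c t) + ν.neg.real (Ioc c t) ≤ m δ :=
      add_le_add (measureReal_mono (Ioc_subset_Ioc_right ht.2) measure_Ioc_lt_top.ne)
        (measureReal_mono (Ioc_subset_Ioc_right ht.2) measure_Ioc_lt_top.ne)
    rw [h.v_eq ht.1.le, hv, zero_add]
    exact (SM.abs_integOn_le hν fun s hs => hy₀ ⟨hs.1.le, hs.2.trans ht.2⟩).trans
      (mul_le_mul_of_nonneg_left hmono (abs_nonneg _))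
  have hu_le : ∀ y ∈ Icc c (c + δ), |u y| ≤ M * m δ * δ := fun y hy => by
    have := intervalIntegral.norm_integral_le_of_norm_le_const (a := c) (b := y) (f := v)
      fun t ht => by
        rw [uIoc_of_le hy.1] at ht
        exact (Real.norm_eq_abs _).symm ▸ hv_le t ⟨ht.1, ht.2.trans hy.2⟩
    rw [Real.norm_eq_abs, abs_of_nonneg (sub_nonneg.2 hy.1)] at this
    rw [h.u_eq c y, hu, zero_add]
    exact this.trans (mul_le_mul_of_nonneg_left (by linarith [hy.2]) (by positivity))
  have hM : M = 0 := by
    have : M ≤ M * m δ * δ := hu_le y₀ hy₀K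
    nlinarith [abs_nonneg (u y₀), mul_lt_one_of_nonneg_of_lt_one_left hm0 hδm hδ1.le]
  filter_upwards [Ioc_mem_nhdsGT (by linarith : c < c + δ)] with y hy
  exact abs_nonpos_iff.1 (hM ▸ hy₀ (Ioc_subset_Icc_self hy))

lemma eq_zero_of_eq_zero (hν : ν.LocFin) (h : IsSolution₀ ν u v) (hu : u a = 0) (hv : v a = 0)
    (hax : a ≤ x) : u x = 0 ∧ v x = 0 := by
  have hvt : ∀ t, a ≤ t → Icc a t ⊆ {y | u y = 0} → v t = 0 := fun t hat hZ => by
    rw [h.v_eq_of_forall_eq_zero hat fun s hs => hZ (Ioc_subset_Icc_self hs), hv]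
  have hZ : Icc a x ⊆ {y | u y = 0} :=
    ((isClosed_eq h.continuous continuous_const).inter isClosed_Icc
      ).Icc_subset_of_forall_mem_nhdsGT_of_Icc_subset hu fun t ht hZ =>
        h.eventually_eq_zero hν (hZ ⟨ht.1, le_rfl⟩) (hvt t ht.1 hZ)
  exact ⟨hZ ⟨hax, le_rfl⟩, hvt x hax hZ⟩

lemma comp_add_eq_mul (hν : ν.LocFin) (h : IsSolution₀ ν u v) (hc : ν.IsPeriodic c) {l : ℝ}
    (hu : u c = l * u 0) (hv : v c = l * v 0) (hx : 0 ≤ x) :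
    u (x + c) = l * u x ∧ v (x + c) = l * v x := by
  have := ((h.comp_add_const hc).sub hν (h.const_mul l)).eq_zero_of_eq_zero hν
    (by simp [hu]) (by simp [hv]) hx
  simpa only [Pi.sub_apply, sub_eq_zero] using this

/-- The monodromy over one period has determinant one (constancy of the Wronskian), so by
Cayley–Hamilton `T² = β T - 1` with `β` its trace. Without a fundamental system at hand, the case
where `w(0)` and `w(p)` are parallel is handled by uniqueness instead. -/
lemma exists_trace_relation (hν : ν.LocFin) (hp : 0 ≤ p) (hper : ν.IsPeriodic p)
    (h : IsSolution₀ ν u v) (h0 : (u 0, v 0) ≠ 0) :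
    ∃ β : ℝ, (u (2 * p) = β * u p - u 0 ∧ v (2 * p) = β * v p - v 0) ∧
      (u (-p) = β * u 0 - u p ∧ v (-p) = β * v 0 - v p) := by
  have W₁ := (h.comp_add_const hper.neg).wronskian_eq hν h hp
  have W₂ := h.wronskian_eq hν (h.comp_add_const hper) hp
  have W₃ := (h.comp_add_const hper.neg).wronskian_eq hν (h.comp_add_const hper) hp
  simp only [add_neg_cancel, zero_add, ← two_mul] at W₁ W₂ W₃
  by_cases hD : u 0 * v p - u p * v 0 = 0
  · obtain ⟨l, hlu, hlv⟩ := exists_eq_mul_of_mul_sub_mul_eq_zero (c₁ := u p) (c₂ := v p) h0 hD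
    obtain ⟨k, hku, hkv⟩ := exists_eq_mul_of_mul_sub_mul_eq_zero (c₁ := u (-p)) (c₂ := v (-p)) h0
      (by linear_combination W₁ - hD)
    obtain ⟨hdu, hdv⟩ := h.comp_add_eq_mul hν hper hlu hlv hp
    obtain ⟨hbu, hbv⟩ := h.comp_add_eq_mul hν hper.neg hku hkv hp
    simp only [add_neg_cancel, ← two_mul] at hdu hdv hbu hbv
    refine ⟨k + l, ⟨?_, ?_⟩, ?_, ?_⟩
    · linear_combination hdu + hbu
    · linear_combination hdv + hbv
    · linear_combination hku + hlu
    · linear_combination hkv + hlv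
  · have hβ := div_mul_cancel₀ (u 0 * v (2 * p) - u (2 * p) * v 0) hD
    refine ⟨(u 0 * v (2 * p) - u (2 * p) * v 0) / (u 0 * v p - u p * v 0), ⟨?_, ?_⟩, ?_, ?_⟩ <;>
      refine mul_left_cancel₀ hD ?_
    · linear_combination (-(u 0)) * W₂ + (-(u p)) * hβ
    · linear_combination (-(v 0)) * W₂ + (-(v p)) * hβ
    · linear_combination (-(u 0)) * W₃ + (u p) * W₁ - (u 0) * hβ
    · linear_combination (-(v 0)) * W₃ + (v p) * W₁ - (v 0) * hβ

end IsSolution₀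

lemma IsSolution.isSolution₀ {μ : SM} {E : ℝ} {u v : ℝ → ℝ} (hμ : μ.LocFin)
    (h : IsSolution μ E u v) : IsSolution₀ (μ.subSmulVolume E) u v := by
  have hv : ∀ a b, IntervalIntegrable v volume a b := fun a b =>
    (h.locInt.integrableOn_isCompact isCompact_uIcc).intervalIntegrable
  have hu : Continuous u := by
    rw [funext h.u_eq]
    exact continuous_const.add (intervalIntegral.continuous_primitive hv 0)
  refine ⟨hv, fun y x => ?_, fun y x hyx => ?_⟩
  · rw [h.u_eq x, h.u_eq y, ← intervalIntegral.integral_add_adjacent_intervals (hv 0 y) (hv y x)]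
    ring
  · rw [h.v_eq x, h.v_eq y, SM.integOn_subSmulVolume hμ hu, ← intRight_sub_intRight hμ hu hyx,
      ← intervalIntegral.integral_of_le hyx, ← intervalIntegral.integral_interval_sub_left
        (hu.intervalIntegrable 0 x) (hu.intervalIntegrable 0 y)]
    ring

lemma half_le_max_norm {V : Type*} [SeminormedAddCommGroup V] [NormedSpace ℝ V] {a b c d : V}
    {β : ℝ} (hb : ‖b‖ = 1) (hd : d = β • c - b) (ha : a = β • b - c) :
    1 / 2 ≤ max ‖a‖ (max ‖c‖ ‖d‖) := by
  by_contra! hlt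
  simp only [max_lt_iff] at hlt
  obtain ⟨ha', hc', hd'⟩ := hlt
  have hβ : |β| < 1 := by
    have : ‖β • b‖ ≤ ‖a‖ + ‖c‖ := by simpa [ha] using norm_add_le (β • b - c) c
    rw [norm_smul, hb, mul_one, Real.norm_eq_abs] at this
    linarith
  have : ‖b‖ ≤ |β| * ‖c‖ + ‖d‖ := by
    rw [show b = β • c - d by rw [hd]; abel]
    exact (norm_sub_le _ _).trans (by rw [norm_smul, Real.norm_eq_abs])
  nlinarith [norm_nonneg c, abs_nonneg β]

lemma EuclideanSpace.norm_vec₂ (x y : ℝ) : ‖!₂[x, y]‖ = √(x ^ 2 + y ^ 2) := by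
  simp [EuclideanSpace.norm_eq, Fin.sum_univ_two]

/-- For a locally bounded `p`-periodic signed measure `μ` and
a solution `(u,v)` of `-u'' + uμ = Eu` with `|u(0)|² + |v(0)|² = 1`, one has
`max{‖(u,v)(-p)‖, ‖(u,v)(p)‖, ‖(u,v)(2p)‖} ≥ 1/2` (Euclidean norm). -/
theorem periodic_three_point_estimate (μ : SM) (hloc : μ.LocFin)
    (p : ℝ) (hp : 0 < p) (hper : μ.IsPeriodic p)
    (E : ℝ) (u v : ℝ → ℝ) (hs : IsSolution μ E u v)
    (hnorm : (u 0) ^ 2 + (v 0) ^ 2 = 1) :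
    1 / 2 ≤ max (Real.sqrt ((u (-p)) ^ 2 + (v (-p)) ^ 2))
        (max (Real.sqrt ((u p) ^ 2 + (v p) ^ 2))
          (Real.sqrt ((u (2 * p)) ^ 2 + (v (2 * p)) ^ 2))) := by
  have h0 : (u 0, v 0) ≠ 0 := fun h => by
    simp only [Prod.mk_eq_zero] at h
    simp [h.1, h.2] at hnorm
  obtain ⟨β, ⟨hdu, hdv⟩, hau, hav⟩ := (hs.isSolution₀ hloc).exists_trace_relation
    (hloc.subSmulVolume E) hp.le (hper.subSmulVolume E) h0
  have key := half_le_max_norm (a := !₂[u (-p), v (-p)]) (c := !₂[u p, v p])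
    (d := !₂[u (2 * p), v (2 * p)]) (β := β)
    (by rw [EuclideanSpace.norm_vec₂, hnorm, sqrt_one])
    (by ext i; fin_cases i <;> simp [hdu, hdv]) (by ext i; fin_cases i <;> simp [hau, hav])
  simpa only [EuclideanSpace.norm_vec₂] using key
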